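/- arXiv:1402.6778 — 15 statements merged into one kernel-verified Lean document; each statement's English description precedes it below -/
import Mathlib

section
/- For all x in [0, π], 5 + 4·cos(x) + 3·cos(2x) + 4·cos(3x) ≥ 0. -/
open Real

theorem stmt_0 (x : ℝ) (hx : x ∈ Set.Icc 0 π) :
    5 + 4 * cos x + 3 * cos (2*x) + 4 * cos (3*x) ≥ 0 := by
  have h2 : cos (2*x) = 2 * cos x ^ 2 - 1 := by
    rw [cos_two_mul]
  have h3 : cos (3*x) = 4 * cos x ^ 3 - 3 * cos x := cos_three_mul x
  have hc1 : -1 ≤ cos x := neg_one_le_cos x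
  have hc2 : cos x ≤ 1 := cos_le_one x
  rw [h2, h3]
  have hq : 0 ≤ 8 * cos x ^ 2 - 5 * cos x + 1 := by nlinarith [sq_nonneg (16 * cos x - 5)]
  nlinarith [mul_nonneg (by linarith : (0:ℝ) ≤ cos x + 1) hq]
end

section
/- For all x in [0, π], 7 + 6·cos(x) + 5·cos(2x) + 4·cos(3x) + 3·cos(4x) + 5·cos(5x) ≥ 0. -/
open Real

theorem stmt_2 (x : ℝ) (hx : x ∈ Set.Icc 0 π) :
    7 + 6 * cos x + 5 * cos (2*x) + 4 * cos (3*x) + 3 * cos (4*x) + 5 * cos (5*x) ≥ 0 := by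
  have h2 : cos (2*x) = 2 * cos x ^ 2 - 1 := Real.cos_two_mul x
  have h3 : cos (3*x) = 4 * cos x ^ 3 - 3 * cos x := Real.cos_three_mul x
  have h4 : cos (4*x) = 2 * cos (2*x) ^ 2 - 1 := by
    rw [show (4:ℝ)*x = 2*(2*x) by ring, Real.cos_two_mul]
  have h5 : cos (5*x) = cos (2*x) * cos (3*x) - sin (2*x) * sin (3*x) := by
    rw [show (5:ℝ)*x = 2*x + 3*x by ring, Real.cos_add]
  have hs : sin (2*x) * sin (3*x) =
      (2 * sin x * cos x) * ((3 * sin x - 4 * sin x ^ 3)) := by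
    rw [Real.sin_two_mul, Real.sin_three_mul]
  have hsq : sin x ^ 2 = 1 - cos x ^ 2 := by
    have := Real.sin_sq_add_cos_sq x; linarith
  have hc1 : -1 ≤ cos x := Real.neg_one_le_cos x
  have hc2 : cos x ≤ 1 := Real.cos_le_one x
  rw [h5, hs, h4, h3, h2]
  set c := cos x with hc
  have key : 7 + 6*c + 5*(2*c^2-1) + 4*(4*c^3-3*c) + 3*(2*(2*c^2-1)^2-1)
      + 5*((2*c^2-1)*(4*c^3-3*c) - (2*sin x*c)*(3*sin x - 4*sin x^3))
      = (c+1) * (80*c^4 - 56*c^3 - 28*c^2 + 14*c + 5) := by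
    linear_combination (-30*c + 40*c*(sin x^2 + 1 - c^2)) * hsq
  rw [key]
  have hq : 80*c^4 - 56*c^3 - 28*c^2 + 14*c + 5 ≥ 0 := by
    have h1 : (1 - c) * (1 + c) ≥ 0 := by nlinarith
    nlinarith [sq_nonneg (c - 1), sq_nonneg (c + 1), sq_nonneg c, sq_nonneg (c^2 - c), sq_nonneg (c^2 + c), sq_nonneg (10*c^2 - 4*c - 1), sq_nonneg (2*c^2 - c - 1), sq_nonneg (3*c^2 - 2*c - 1), mul_nonneg h1 (sq_nonneg (c+1)), mul_nonneg h1 (sq_nonneg (c-1)), mul_nonneg h1 (sq_nonneg c), mul_nonneg h1 (sq_nonneg (2*c+1)), mul_nonneg h1 (sq_nonneg (3*c-1))]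
  nlinarith [hq, hc1]
end

section
/- The quartic polynomial 80y⁴ − 56y³ − 28y² + 14y + 5 is strictly positive for all y in [−1, 1]. -/
theorem stmt_3 (y : ℝ) (hy : y ∈ Set.Icc (-1 : ℝ) 1) :
    80*y^4 - 56*y^3 - 28*y^2 + 14*y + 5 > 0 := by
  obtain ⟨h1, h2⟩ := hy
  nlinarith [sq_nonneg (y - 1), sq_nonneg (y + 1), sq_nonneg y, sq_nonneg (y^2 - y), sq_nonneg (2*y^2 - y), sq_nonneg (4*y^2 - 2*y - 1), mul_nonneg (sub_nonneg.2 h2) (by linarith : (0:ℝ) ≤ y + 1), sq_nonneg (y^2 - 1), sq_nonneg (4*y^2 - 2*y), mul_nonneg (mul_nonneg (sub_nonneg.2 h2) (by linarith : (0:ℝ) ≤ y + 1)) (sq_nonneg y)]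
end

section
/- For all x in [0, π], 4·sin(x) + 3·sin(2x) + 2·sin(3x) − (4/5)·sin(4x) ≥ 0. -/
open Real

theorem stmt_4 (x : ℝ) (hx : x ∈ Set.Icc 0 π) :
    4 * sin x + 3 * sin (2*x) + 2 * sin (3*x) - (4/5) * sin (4*x) ≥ 0 := by
  obtain ⟨h0, h1⟩ := hx
  have hs : sin x ≥ 0 := Real.sin_nonneg_of_nonneg_of_le_pi h0 h1
  have hc1 : (0:ℝ) ≤ 1 - cos x := by nlinarith [Real.cos_le_one x]
  have h4 : (4:ℝ)*x = 2*(2*x) := by ring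
  rw [h4, Real.sin_two_mul (2*x), Real.sin_two_mul, Real.cos_two_mul,
    Real.sin_three_mul]
  have hpy : sin x ^ 2 + cos x ^ 2 = 1 := sin_sq_add_cos_sq x
  nlinarith [mul_nonneg (mul_nonneg hs hc1) (sq_nonneg (cos x + 2/5)),
    mul_nonneg hs (sq_nonneg (cos x + 319/840)), hs]
end

section
/- For all x in [0, π], 8·sin(x) + 7·sin(2x) + 6·sin(3x) + 5·sin(4x) + 4·sin(5x) ≥ 0. -/
open Real

theorem stmt_6 (x : ℝ) (hx : x ∈ Set.Icc 0 π) :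
    8 * sin x + 7 * sin (2*x) + 6 * sin (3*x) + 5 * sin (4*x) + 4 * sin (5*x) ≥ 0 := by
  obtain ⟨h0, h1⟩ := hx
  have hs : sin x ≥ 0 := Real.sin_nonneg_of_nonneg_of_le_pi h0 h1
  set s := sin x with hsdef
  set c := cos x with hcdef
  have hc1 : c ≤ 1 := Real.cos_le_one x
  have hc2 : -1 ≤ c := Real.neg_one_le_cos x
  have hpyth : s^2 + c^2 = 1 := Real.sin_sq_add_cos_sq x
  have h2 : sin (2*x) = 2 * s * c := by
    rw [two_mul, Real.sin_add]; ring
  have hc2x : cos (2*x) = 2 * c^2 - 1 := by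
    rw [two_mul, Real.cos_add]; nlinarith [hpyth]
  have h3 : sin (3*x) = s * (4*c^2 - 1) := by
    have : (3:ℝ)*x = 2*x + x := by ring
    rw [this, Real.sin_add, h2, hc2x]; ring
  have hc3x : cos (3*x) = c * (4*c^2 - 3) := by
    have : (3:ℝ)*x = 2*x + x := by ring
    rw [this, Real.cos_add, h2, hc2x]; nlinarith [hpyth]
  have h4 : sin (4*x) = 4 * s * c * (2*c^2 - 1) := by
    have : (4:ℝ)*x = 3*x + x := by ring
    rw [this, Real.sin_add, h3, hc3x]; nlinarith [hpyth]
  have hc4x : cos (4*x) = 8*c^4 - 8*c^2 + 1 := by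
    have : (4:ℝ)*x = 3*x + x := by ring
    rw [this, Real.cos_add, h3, hc3x]; nlinarith [hpyth]
  have h5 : sin (5*x) = s * (16*c^4 - 12*c^2 + 1) := by
    have : (5:ℝ)*x = 4*x + x := by ring
    rw [this, Real.sin_add, h4, hc4x]; ring
  rw [h2, h3, h4, h5]
  have key : 64*c^4 + 40*c^3 - 24*c^2 - 6*c + 6 ≥ 0 := by
    nlinarith [sq_nonneg (c + 0.69), sq_nonneg (8*c^2 + 2.5*c - 3), sq_nonneg c, sq_nonneg (c+1), sq_nonneg (c-1), sq_nonneg (c^2 + c), sq_nonneg (8*c^2+5*c-3)]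
  nlinarith [mul_nonneg hs key.le]
end

section
/- For all x in [0, π], 7/5 + cos(x) + sin(x) + 2·sin(2x) + sin(3x) ≥ 0. -/
open Real

theorem stmt_9 (x : ℝ) (hx : x ∈ Set.Icc 0 π) :
    7/5 + cos x + sin x + 2 * sin (2*x) + sin (3*x) ≥ 0 := by
  obtain ⟨h0, h1⟩ := hx
  have hs : 0 ≤ sin x := Real.sin_nonneg_of_nonneg_of_le_pi h0 h1
  have hpy : sin x ^ 2 + cos x ^ 2 = 1 := sin_sq_add_cos_sq x
  have hc1 : -1 ≤ cos x := neg_one_le_cos x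
  have hc2 : cos x ≤ 1 := cos_le_one x
  rw [sin_two_mul, sin_three_mul]
  set s := sin x
  set c := cos x
  rcases le_or_gt 0 c with hc | hc
  · nlinarith [mul_nonneg hs hc, mul_nonneg (mul_nonneg hs hc) hc, sq_nonneg s, sq_nonneg c]
  · have hgoal : 7/5 + c + s + 2 * (2 * s * c) + (3 * s - 4 * s ^ 3)
        = 7/5 + c + 4 * s * c * (1 + c) := by nlinarith [hpy]
    rw [hgoal]
    have ha : 0 ≤ 4 * s * (-c) * (1 + c) :=
      mul_nonneg (mul_nonneg (by positivity) (by linarith)) (by linarith)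
    have hb : 0 ≤ 7/5 + c := by linarith
    have key : (4 * s * (-c) * (1 + c))^2 ≤ (7/5 + c)^2 := by
      have hs2 : s^2 = 1 - c^2 := by linarith
      nlinarith [sq_nonneg (c + 11/20), sq_nonneg (c*(c+11/20)), sq_nonneg ((1+c)*(c+11/20)), sq_nonneg (c^2 + c), sq_nonneg (c+1), mul_nonneg (mul_nonneg hb hb) (sq_nonneg (c+11/20))]
    nlinarith [key, ha, hb, sq_nonneg (7/5 + c - 4*s*(-c)*(1+c))]
end

section
/- For all y in [−1, 1], (4y + 4y²)·√(1 − y²) + (7/5 + y) ≥ 0. -/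
open Real

theorem stmt_10 (y : ℝ) (hy : y ∈ Set.Icc (-1 : ℝ) 1) :
    (4*y + 4*y^2) * Real.sqrt (1 - y^2) + (7/5 + y) ≥ 0 := by
  obtain ⟨h1, h2⟩ := hy
  have hnn : (0:ℝ) ≤ 1 - y^2 := by nlinarith
  set s := Real.sqrt (1 - y^2) with hs
  have hs0 : 0 ≤ s := Real.sqrt_nonneg _
  have hs2 : s^2 = 1 - y^2 := Real.sq_sqrt hnn
  have hc : (0:ℝ) ≤ 7/5 + y := by linarith
  rcases le_or_gt 0 (4*y + 4*y^2) with h | h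
  · have := mul_nonneg h hs0
    linarith
  · -- here -1 < y < 0
    have hA : (4*y + 4*y^2) * s ≤ 0 := mul_nonpos_of_nonpos_of_nonneg (le_of_lt h) hs0
    have hy0 : y < 0 := by nlinarith
    have key : ((4*y + 4*y^2) * s)^2 ≤ (7/5 + y)^2 := by
      have : ((4*y + 4*y^2) * s)^2 = 16*y^2*(1+y)^2*(1-y^2) := by
        rw [mul_pow, hs2]; ring
      rw [this]
      nlinarith [sq_nonneg (y + 1), sq_nonneg (y + 0.5554), sq_nonneg (y*(y+1)), sq_nonneg ((y+1)*(y+0.5554)), mul_nonneg (sq_nonneg (y+1)) (sq_nonneg (y+0.5554)), mul_nonneg (mul_nonneg (neg_nonneg.2 hy0.le) (sq_nonneg (y+1))) (sq_nonneg (y+0.5554))]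
    nlinarith [key, hA, hc, sq_nonneg ((4*y + 4*y^2) * s + 7/5 + y)]
end

section
/- For all x in [0, π], sin(x) + (1/2)·sin(2x) + (1/√2)·(sin(3x) + (3/4)·sin(4x)) ≥ 0. -/
open Real

theorem stmt_11 (x : ℝ) (hx : x ∈ Set.Icc 0 π) :
    sin x + (1/2) * sin (2*x) + (1 / Real.sqrt 2) * (sin (3*x) + (3/4) * sin (4*x)) ≥ 0 := by
  obtain ⟨hx0, hxp⟩ := hx
  have hs : sin x ≥ 0 := Real.sin_nonneg_of_nonneg_of_le_pi hx0 hxp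
  have hc1 : -1 ≤ cos x := Real.neg_one_le_cos x
  have ht : (0:ℝ) < Real.sqrt 2 := by positivity
  have hsq : Real.sqrt 2 ^ 2 = 2 := Real.sq_sqrt (by norm_num)
  have h76 : Real.sqrt 2 ≥ 7/6 := by nlinarith [hsq, ht]
  have h1 : Real.sqrt 2 * (1/Real.sqrt 2) = 1 := by field_simp
  have hp : sin x ^ 2 = 1 - cos x ^ 2 := by
    have := sin_sq_add_cos_sq x; linarith
  have e2 : sin (2*x) = 2 * sin x * cos x := sin_two_mul x
  have e3 : sin (3*x) = 3 * sin x - 4 * sin x ^ 3 := sin_three_mul x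
  have e4 : sin (4*x) = 2 * (2 * sin x * cos x) * (2 * cos x ^ 2 - 1) := by
    have h4 : (4:ℝ)*x = 2*(2*x) := by ring
    rw [h4, sin_two_mul, sin_two_mul, cos_two_mul]
  have key : sin x + (1/2) * sin (2*x) + (1 / Real.sqrt 2) * (sin (3*x) + (3/4) * sin (4*x))
      = (1/Real.sqrt 2) * (sin x * (1 + cos x) * (Real.sqrt 2 + 6 * cos x ^ 2 - 2 * cos x - 1)) := by
    rw [e2, e3, e4]
    linear_combination (-(4:ℝ)*(1/Real.sqrt 2)*sin x) * hp
      + (sin x * (1 + cos x) - 2*sin x - 2*sin x*cos x) * h1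
  rw [key]
  have hf : Real.sqrt 2 + 6 * cos x ^ 2 - 2 * cos x - 1 ≥ 0 := by
    nlinarith [sq_nonneg (6 * cos x - 1), h76]
  have := mul_nonneg (mul_nonneg hs (by linarith : (0:ℝ) ≤ 1 + cos x)) hf
  positivity
end

section
/- For all z in [0, 2], 3√2·z³ − 7√2·z² + (7/√2 + 1)·z ≥ 0. -/
open Real

theorem stmt_12 (z : ℝ) (hz : z ∈ Set.Icc (0 : ℝ) 2) :
    3 * Real.sqrt 2 * z^3 - 7 * Real.sqrt 2 * z^2 + (7 / Real.sqrt 2 + 1) * z ≥ 0 := by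
  obtain ⟨h0, h2⟩ := hz
  have hs : Real.sqrt 2 ^ 2 = 2 := Real.sq_sqrt (by norm_num)
  have hpos : (0:ℝ) < Real.sqrt 2 := Real.sqrt_pos.mpr (by norm_num)
  have hlb : (1.41:ℝ) < Real.sqrt 2 := by
    nlinarith [hs, hpos]
  have h7 : 7 / Real.sqrt 2 = 7 * Real.sqrt 2 / 2 := by
    field_simp; nlinarith [hs]
  rw [h7]
  nlinarith [sq_nonneg z, sq_nonneg (z-1), sq_nonneg (z*Real.sqrt 2 - 1), mul_nonneg h0 (sq_nonneg (z-1)), mul_nonneg h0 h0, hs, hlb, sq_nonneg (6*z - 7)]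
end

section
/- For all x in [0, π], sin(x) + (1/2)·sin(2x) + (1/√2)·(sin(3x) + (3/4)·sin(4x)) + (1/√3)·(sin(5x) + (5/6)·sin(6x)) ≥ 0. -/
open Real


set_option maxHeartbeats 1000000 in
lemma stmt_13_aux (c r2 r3 : ℝ) (h2l : r2 ≥ 1.414) (h2u : r2 ≤ 1.415)
    (h3l : r3 ≥ 1.732) (h3u : r3 ≤ 1.733) :
    0 ≤ 1 + (r2 / 2) * (6*c^2 - 2*c - 1)
      + (r3 / 9) * (80*c^4 - 32*c^3 - 48*c^2 + 12*c + 3) := by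
  have hgb : (0:ℝ) ≤ 6*c^2 - 2*c - 1 + 7/6 := by nlinarith [sq_nonneg (c - 1/6)]
  have hhb : (0:ℝ) ≤ 80*c^4 - 32*c^3 - 48*c^2 + 12*c + 3 + 6.05 := by
    nlinarith [sq_nonneg (c^2 - 0.2*c - 0.33), sq_nonneg (1.264*c + 0.569),
      sq_nonneg c, sq_nonneg (c + 1)]
  have hu0 : (0:ℝ) ≤ r2 / 2 - 0.707 := by linarith
  have hu1 : r2 / 2 - 0.707 ≤ 0.0005 := by linarith
  have hv0 : (0:ℝ) ≤ r3 / 9 - 0.19244 := by linarith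
  have hv1 : r3 / 9 - 0.19244 ≤ 0.00012 := by linarith
  have hug : (r2 / 2 - 0.707) * (6*c^2 - 2*c - 1) ≥ -0.0006 := by
    nlinarith [mul_nonneg hu0 hgb, hu1]
  have hvh : (r3 / 9 - 0.19244) * (80*c^4 - 32*c^3 - 48*c^2 + 12*c + 3) ≥ -0.0008 := by
    nlinarith [mul_nonneg hv0 hhb, hv1]
  nlinarith [hug, hvh, sq_nonneg (c^2 - 0.2*c - 0.19), sq_nonneg (0.489*c - 0.281),
    sq_nonneg c, sq_nonneg (c + 1)]

set_option maxHeartbeats 1000000 in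
theorem stmt_13 (x : ℝ) (hx : x ∈ Set.Icc 0 π) :
    sin x + (1/2) * sin (2*x) + (1 / Real.sqrt 2) * (sin (3*x) + (3/4) * sin (4*x))
      + (1 / Real.sqrt 3) * (sin (5*x) + (5/6) * sin (6*x)) ≥ 0 := by
  obtain ⟨hx0, hxπ⟩ := hx
  set s := sin x with hs
  set c := cos x with hc
  have hsc : s ^ 2 + c ^ 2 = 1 := sin_sq_add_cos_sq x
  have hs0 : 0 ≤ s := sin_nonneg_of_nonneg_of_le_pi hx0 hxπ
  have hc1 : -1 ≤ c := neg_one_le_cos x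
  have hc1' : c ≤ 1 := cos_le_one x
  have h2 : sin (2*x) = 2 * s * c := sin_two_mul x
  have c2 : cos (2*x) = 2 * c ^ 2 - 1 := cos_two_mul x
  have h3 : sin (3*x) = sin (2*x) * c + cos (2*x) * s := by
    rw [show (3:ℝ)*x = 2*x + x by ring, sin_add]
  have c3 : cos (3*x) = cos (2*x) * c - sin (2*x) * s := by
    rw [show (3:ℝ)*x = 2*x + x by ring, cos_add]
  have h4 : sin (4*x) = sin (3*x) * c + cos (3*x) * s := by
    rw [show (4:ℝ)*x = 3*x + x by ring, sin_add]
  have c4 : cos (4*x) = cos (3*x) * c - sin (3*x) * s := by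
    rw [show (4:ℝ)*x = 3*x + x by ring, cos_add]
  have h5 : sin (5*x) = sin (4*x) * c + cos (4*x) * s := by
    rw [show (5:ℝ)*x = 4*x + x by ring, sin_add]
  have c5 : cos (5*x) = cos (4*x) * c - sin (4*x) * s := by
    rw [show (5:ℝ)*x = 4*x + x by ring, cos_add]
  have h6 : sin (6*x) = sin (5*x) * c + cos (5*x) * s := by
    rw [show (6:ℝ)*x = 5*x + x by ring, sin_add]
  have hs2 : Real.sqrt 2 > 0 := Real.sqrt_pos.mpr (by norm_num)
  have hs3 : Real.sqrt 3 > 0 := Real.sqrt_pos.mpr (by norm_num)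
  have hsq2 : Real.sqrt 2 ^ 2 = 2 := Real.sq_sqrt (by norm_num)
  have hsq3 : Real.sqrt 3 ^ 2 = 3 := Real.sq_sqrt (by norm_num)
  have hs2lb : Real.sqrt 2 ≥ 1.414 := by nlinarith [hsq2, hs2]
  have hs2ub : Real.sqrt 2 ≤ 1.415 := by nlinarith [hsq2, hs2]
  have hs3lb : Real.sqrt 3 ≥ 1.732 := by nlinarith [hsq3, hs3]
  have hs3ub : Real.sqrt 3 ≤ 1.733 := by nlinarith [hsq3, hs3]
  have e2 : 1 / Real.sqrt 2 = Real.sqrt 2 / 2 := by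
    rw [div_eq_div_iff hs2.ne' (by norm_num : (2:ℝ) ≠ 0)]
    linear_combination -hsq2
  have e3 : 1 / Real.sqrt 3 = Real.sqrt 3 / 3 := by
    rw [div_eq_div_iff hs3.ne' (by norm_num : (3:ℝ) ≠ 0)]
    linear_combination -hsq3
  have key : s + (1/2) * sin (2*x) + (1 / Real.sqrt 2) * (sin (3*x) + (3/4) * sin (4*x))
      + (1 / Real.sqrt 3) * (sin (5*x) + (5/6) * sin (6*x))
      = s * (1 + c) *
        (1 + (Real.sqrt 2 / 2) * (6*c^2 - 2*c - 1)
           + (Real.sqrt 3 / 9) * (80*c^4 - 32*c^3 - 48*c^2 + 12*c + 3)) := by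
    simp only [e2, e3, h6, h5, c5, h4, c4, h3, c3, c2, h2]
    linear_combination ((5:ℝ)/9 * s^3 * c * Real.sqrt 3 - 55/9 * s * c^3 * Real.sqrt 3
      - 8/3 * s * c^2 * Real.sqrt 3 - 3/4 * s * c * Real.sqrt 2
      + 5/3 * s * c * Real.sqrt 3 + 1/3 * s * Real.sqrt 3) * hsc
  rw [key]
  have hQ := stmt_13_aux c _ _ hs2lb hs2ub hs3lb hs3ub
  exact mul_nonneg (mul_nonneg hs0 (by linarith)) hQ
end

section
/- For all x in [0, π], sin(x)/2 + sin(2x)/3 + sin(3x)/4 + sin(4x)/5 − (44/1000)·sin(6x) ≥ 0. -/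
open Real

theorem stmt_15 (x : ℝ) (hx : x ∈ Set.Icc 0 π) :
    sin x / 2 + sin (2*x) / 3 + sin (3*x) / 4 + sin (4*x) / 5 - (44/1000) * sin (6*x) ≥ 0 := by
  obtain ⟨h0, h1⟩ := hx
  have hs : 0 ≤ sin x := sin_nonneg_of_nonneg_of_le_pi h0 h1
  have hc1 : -1 ≤ cos x := neg_one_le_cos x
  have hc2 : cos x ≤ 1 := cos_le_one x
  have hpy : sin x ^ 2 + cos x ^ 2 = 1 := sin_sq_add_cos_sq x
  have h2 : sin (2*x) = 2 * sin x * cos x := sin_two_mul x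
  have c2 : cos (2*x) = 2 * cos x ^ 2 - 1 := cos_two_mul x
  have h3 : sin (3*x) = 3 * sin x - 4 * sin x ^ 3 := sin_three_mul x
  have c3 : cos (3*x) = 4 * cos x ^ 3 - 3 * cos x := cos_three_mul x
  have h4 : sin (4*x) = 2 * sin (2*x) * cos (2*x) := by
    rw [show (4:ℝ)*x = 2*(2*x) by ring, sin_two_mul]
  have h6 : sin (6*x) = 2 * sin (3*x) * cos (3*x) := by
    rw [show (6:ℝ)*x = 2*(3*x) by ring, sin_two_mul]
  rw [h6, h4, h3, c3, h2, c2]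
  set s := sin x
  set c := cos x
  have hs2 : s ^ 2 = 1 - c ^ 2 := by nlinarith
  have key : s / 2 + 2 * s * c / 3 + (3 * s - 4 * s ^ 3) / 4 + 2 * (2 * s * c) * (2 * c ^ 2 - 1) / 5 -
      44 / 1000 * (2 * (3 * s - 4 * s ^ 3) * (4 * c ^ 3 - 3 * c))
      = s * (1/4 - 149/375*c + c^2 + 376/125*c^3 - 176/125*c^5) := by
    have e3 : s ^ 3 = s * (1 - c ^ 2) := by rw [pow_succ, hs2]; ring
    rw [e3]; ring
  rw [key]
  have hP : (0:ℝ) ≤ 1/4 - 149/375*c + c^2 + 376/125*c^3 - 176/125*c^5 := by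
    nlinarith [sq_nonneg (c + 96/100), sq_nonneg (c - 1), sq_nonneg c, sq_nonneg (c+1),
      mul_nonneg (sub_nonneg.2 hc2) (by linarith : (0:ℝ) ≤ 1 + c),
      mul_nonneg (mul_nonneg (sub_nonneg.2 hc2) (by linarith : (0:ℝ) ≤ 1 + c)) (sq_nonneg (c + 96/100)),
      mul_nonneg (mul_nonneg (sub_nonneg.2 hc2) (by linarith : (0:ℝ) ≤ 1 + c)) (sq_nonneg c),
      mul_nonneg (sub_nonneg.2 hc2) (sq_nonneg (c + 96/100)),
      mul_nonneg (by linarith : (0:ℝ) ≤ 1 + c) (sq_nonneg (c - 1))]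
  positivity
end

section
/- For all x in [0, π], sin(x)/2 + sin(2x)/3 + sin(3x)/4 + sin(4x)/5 > −44/1000. -/
open Real

set_option maxHeartbeats 1000000 in
theorem stmt_16 (x : ℝ) (hx : x ∈ Set.Icc 0 π) :
    sin x / 2 + sin (2*x) / 3 + sin (3*x) / 4 + sin (4*x) / 5 > -(44/1000) := by
  obtain ⟨h0, h1⟩ := hx
  have hs : 0 ≤ sin x := sin_nonneg_of_nonneg_of_le_pi h0 h1
  have hpyth : sin x ^ 2 + cos x ^ 2 = 1 := sin_sq_add_cos_sq x
  have hc1 : -1 ≤ cos x := neg_one_le_cos x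
  have hc2 : cos x ≤ 1 := cos_le_one x
  have h2 : sin (2*x) = 2 * sin x * cos x := sin_two_mul x
  have h3 : sin (3*x) = 3 * sin x - 4 * sin x ^ 3 := sin_three_mul x
  have h4 : sin (4*x) = 2 * (2 * sin x * cos x) * (cos x ^ 2 - sin x ^ 2) := by
    rw [show (4:ℝ)*x = 2*(2*x) by ring, sin_two_mul, sin_two_mul, cos_two_mul']
  rw [h2, h3, h4]
  set s := sin x with hsdef
  set c := cos x with hcdef
  have hs2 : s^2 = 1 - c^2 := by linarith
  -- the sum equals s * Q(c) with Q(c) = 1/4 - 2c/15 + c^2 + 8c^3/5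
  have hkey : s / 2 + 2 * s * c / 3 + (3 * s - 4 * s ^ 3) / 4 +
      2 * (2 * s * c) * (c ^ 2 - s ^ 2) / 5
      = s * (1/4 - 2*c/15 + c^2 + 8*c^3/5) := by
    have h5 : s^3 = s * (1 - c^2) := by nlinarith [hs2]
    nlinarith [hs2, h5]
  rw [hkey]
  rcases le_or_gt 0 (1/4 - 2*c/15 + c^2 + 8*c^3/5) with hQ | hQ
  · have h6 : (0:ℝ) ≤ s * (1/4 - 2*c/15 + c^2 + 8*c^3/5) := mul_nonneg hs hQ
    linarith [h6]
  · -- Q < 0 forces c < -9/10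
    have hc9 : c < -9/10 := by
      nlinarith [sq_nonneg (c+1), sq_nonneg (c+9/10),
        mul_nonneg (by linarith : (0:ℝ) ≤ c+1) (sq_nonneg (c+9/10)),
        mul_nonneg (by linarith : (0:ℝ) ≤ 1-c) (sq_nonneg (c+9/10))]
    have hR : (1-c^2) * (1/4 - 2*c/15 + c^2 + 8*c^3/5)^2 < 1936/1000000 := by
      nlinarith [sq_nonneg (c+1), sq_nonneg (c+0.97),
        mul_nonneg (by linarith : (0:ℝ) ≤ c+1) (sq_nonneg (c+0.97)),
        sq_nonneg ((c+1)*(c+0.97)),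
        mul_nonneg (mul_nonneg (by linarith : (0:ℝ) ≤ c+1) (by linarith : (0:ℝ) ≤ c+1)) (sq_nonneg (c+0.97)),
        sq_nonneg ((1/4 - 2*c/15 + c^2 + 8*c^3/5)*(c+1))]
    have hA : 0 < 44/1000 - s * (1/4 - 2*c/15 + c^2 + 8*c^3/5) := by
      nlinarith [mul_nonneg hs (le_of_lt (neg_pos.mpr hQ))]
    nlinarith [hR, hA, hs2, sq_nonneg (s * (1/4 - 2*c/15 + c^2 + 8*c^3/5))]
end

section
/- The set of real numbers a such that 2·sin(x) + sin(2x) + a·sin(3x) ≥ 0 for all x in [0, π] is exactly the closed interval [0, 1 + √3/2]. -/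
open Real

lemma sin_three_factor (x : ℝ) :
    Real.sin (3*x) = Real.sin x * (4 * Real.cos x ^ 2 - 1) := by
  linear_combination Real.sin_three_mul x - (4 * Real.sin x) * Real.sin_sq_add_cos_sq x

lemma key_factor (a c : ℝ) (hc1 : -1 < c) (hc2 : c < 1)
    (h : ∀ x ∈ Set.Icc 0 π, 2 * sin x + sin (2*x) + a * sin (3*x) ≥ 0) :
    0 ≤ 2 + 2*c + a*(4*c^2 - 1) := by
  set x := Real.arccos c with hxdef
  have hx : x ∈ Set.Icc 0 π := ⟨Real.arccos_nonneg c, Real.arccos_le_pi c⟩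
  have hcos : Real.cos x = c := Real.cos_arccos hc1.le hc2.le
  have hsin_pos : 0 < Real.sin x := by
    rw [hxdef, Real.sin_arccos]
    exact Real.sqrt_pos.mpr (by nlinarith)
  have hS := h x hx
  rw [Real.sin_two_mul, sin_three_factor, hcos] at hS
  by_contra hneg
  push_neg at hneg
  nlinarith [mul_pos hsin_pos (by linarith : 0 < -(2 + 2*c + a*(4*c^2 - 1)))]

theorem stmt_17 :
    {a : ℝ | ∀ x ∈ Set.Icc 0 π, 2 * sin x + sin (2*x) + a * sin (3*x) ≥ 0}
      = Set.Icc 0 (1 + Real.sqrt 3 / 2) := by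
  have hs0 : (0:ℝ) ≤ Real.sqrt 3 := Real.sqrt_nonneg 3
  have hs : Real.sqrt 3 ^ 2 = 3 := Real.sq_sqrt (by norm_num)
  have hs32 : (3:ℝ)/2 < Real.sqrt 3 := by nlinarith
  have hs2 : Real.sqrt 3 ≤ 2 := by nlinarith
  ext a
  simp only [Set.mem_setOf_eq, Set.mem_Icc]
  constructor
  · intro h
    constructor
    · -- a ≥ 0
      by_contra hlt
      push_neg at hlt
      rcases le_or_gt a (-1) with hA | hA
      · have key := key_factor a (-3/4) (by norm_num) (by norm_num) h
        nlinarith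
      · have key := key_factor a (-1 - a/4) (by linarith) (by linarith) h
        have hpos : (0:ℝ) < 5/2 + 2*a + a^2/4 := by nlinarith [sq_nonneg a]
        nlinarith [mul_pos (by linarith : (0:ℝ) < -a) hpos]
    · -- a ≤ 1 + √3/2
      have key := key_factor a (-1 + Real.sqrt 3 / 2) (by linarith) (by linarith) h
      by_contra hgt
      push_neg at hgt
      nlinarith [mul_pos (by linarith : (0:ℝ) < 4*Real.sqrt 3 - 6)
        (by linarith : (0:ℝ) < a - (1 + Real.sqrt 3/2))]
  · rintro ⟨ha0, ha1⟩ x ⟨hx0, hxπ⟩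
    have hsin : 0 ≤ Real.sin x := Real.sin_nonneg_of_nonneg_of_le_pi hx0 hxπ
    have hc1 : -1 ≤ Real.cos x := Real.neg_one_le_cos x
    have hc2 : Real.cos x ≤ 1 := Real.cos_le_one x
    rw [Real.sin_two_mul, sin_three_factor]
    set c := Real.cos x
    have key : 0 ≤ 2 + 2*c + a*(4*c^2 - 1) := by
      rcases le_or_gt (4*c^2) 1 with h4 | h4
      · have hid : 2 + 2*c + a*(4*c^2 - 1)
            = (4 + 2*Real.sqrt 3)*(c + 1 - Real.sqrt 3/2)^2
              + (1 + Real.sqrt 3/2 - a)*(1 - 4*c^2) := by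
          linear_combination (2*c + 1 - Real.sqrt 3/2) * hs
        rw [hid]
        have t1 : (0:ℝ) ≤ (4 + 2*Real.sqrt 3)*(c + 1 - Real.sqrt 3/2)^2 :=
          mul_nonneg (by linarith) (sq_nonneg _)
        have t2 : (0:ℝ) ≤ (1 + Real.sqrt 3/2 - a)*(1 - 4*c^2) :=
          mul_nonneg (by linarith) (by linarith)
        linarith
      · nlinarith [mul_nonneg ha0 (by linarith : (0:ℝ) ≤ 4*c^2 - 1)]
    nlinarith [mul_nonneg hsin key]
end

section
/- For a real parameter a, the quadratic 4a·y² + 2y + (2 − a) is nonnegative for all y in [−1, 1] if and only if a ∈ [0, 1 + √3/2]. -/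
theorem stmt_18 (a : ℝ) :
    (∀ y ∈ Set.Icc (-1 : ℝ) 1, 4*a*y^2 + 2*y + (2 - a) ≥ 0)
      ↔ a ∈ Set.Icc 0 (1 + Real.sqrt 3 / 2) := by
  have hs3 : Real.sqrt 3 ^ 2 = 3 := Real.sq_sqrt (by norm_num)
  have hs3nn : Real.sqrt 3 ≥ 3/2 := by nlinarith [Real.sqrt_nonneg 3]
  constructor
  · intro h
    have h1 := h (-1) (by norm_num)
    have ha0 : 0 ≤ a := by nlinarith
    refine ⟨ha0, ?_⟩
    by_contra hgt
    push_neg at hgt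
    have ha1 : a ≥ 1 := by nlinarith
    have hapos : (0:ℝ) < 4 * a := by linarith
    have hmem : -1/(4*a) ∈ Set.Icc (-1:ℝ) 1 := by
      constructor
      · rw [neg_div, neg_le_neg_iff, div_le_one hapos]; linarith
      · rw [div_le_iff₀ hapos]; linarith
    have h2 := h _ hmem
    have key : 4*a*(-1/(4*a))^2 + 2*(-1/(4*a)) + (2-a) = (-(4*a^2) + 8*a - 1)/(4*a) := by
      field_simp; ring
    rw [key, ge_iff_le, le_div_iff₀ hapos] at h2
    nlinarith [mul_pos (by linarith : (0:ℝ) < 2*a - 2 - Real.sqrt 3)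
      (by linarith : (0:ℝ) < 2*a - 2 + Real.sqrt 3)]
  · rintro ⟨ha0, ha1⟩ y ⟨hy1, hy2⟩
    rcases le_or_gt (4*a^2 - 8*a + 1) 0 with hc | hc
    · rcases eq_or_lt_of_le ha0 with rfl | hapos
      · nlinarith
      · nlinarith [sq_nonneg (4*a*y + 1), mul_pos hapos hapos]
    · have ha14 : a < 1/4 := by
        by_contra hh
        push_neg at hh
        have h2 : (2*a - 2 - Real.sqrt 3) ≤ 0 := by linarith
        have h3 : (0:ℝ) ≤ 2*a - 2 + Real.sqrt 3 := by linarith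
        nlinarith [mul_nonpos_of_nonpos_of_nonneg h2 h3]
      nlinarith [mul_nonneg (by linarith : (0:ℝ) ≤ y + 1)
        (by nlinarith : (0:ℝ) ≤ 4*a*y - 4*a + 2)]
end

section
/- For all x in [0, π], 36·sin(x) + 18·sin(2x) + 28·sin(3x) + 21·sin(4x) + 24·sin(5x) ≥ 0. -/
open Real

theorem stmt_19 (x : ℝ) (hx : x ∈ Set.Icc 0 π) :
    36 * sin x + 18 * sin (2*x) + 28 * sin (3*x) + 21 * sin (4*x) + 24 * sin (5*x) ≥ 0 := by
  obtain ⟨hx0, hxpi⟩ := hx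
  have hs : sin x ≥ 0 := sin_nonneg_of_nonneg_of_le_pi hx0 hxpi
  have hpyth : sin x ^ 2 + cos x ^ 2 = 1 := sin_sq_add_cos_sq x
  have hc1 : cos x ≤ 1 := cos_le_one x
  have hc2 : -1 ≤ cos x := neg_one_le_cos x
  have e2 : (2:ℝ)*x = x + x := by ring
  have e3 : (3:ℝ)*x = 2*x + x := by ring
  have e4 : (4:ℝ)*x = 3*x + x := by ring
  have e5 : (5:ℝ)*x = 4*x + x := by ring
  rw [e5, sin_add, e4, sin_add, cos_add, e3, sin_add, cos_add, e2, sin_add, cos_add]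
  set s := sin x with hsdef
  set c := cos x with hcdef
  have key : 36 * s + 18 * (s * c + c * s) + 28 * ((s * c + c * s) * c + (c * c - s * s) * s) +
        21 * (((s * c + c * s) * c + (c * c - s * s) * s) * c + ((c * c - s * s) * c - (s * c + c * s) * s) * s) +
      24 * ((((s * c + c * s) * c + (c * c - s * s) * s) * c + ((c * c - s * s) * c - (s * c + c * s) * s) * s) * c +
          (((c * c - s * s) * c - (s * c + c * s) * s) * c - ((s * c + c * s) * c + (c * c - s * s) * s) * s) * s)
      = s * (384*c^4 + 168*c^3 - 176*c^2 - 48*c + 32) := by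
    linear_combination (24*s^3 - 264*s*c^2 - 84*s*c - 4*s) * hpyth
  rw [key]
  have hq : 384*c^4 + 168*c^3 - 176*c^2 - 48*c + 32 ≥ 0 := by
    nlinarith [sq_nonneg (c - 2/5), sq_nonneg (c^2 + 7/32*c - 1/4), sq_nonneg (c + 1), sq_nonneg c, sq_nonneg (c^2 - 1/6), sq_nonneg (c*(c-2/5)), sq_nonneg (c^2 + c/2 - 1/3)]
  positivity
end
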